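/- Let $\psi : \mathbb{R}^n \to \mathbb{R}$ be nonnegative and continuous on a closed convex set $K$, and for $x \in K$ let $B_\psi(x) = \{u \in \mathbb{R}^p : \|u\|_\infty \le \psi(x)\}$. Then the mapping $(u, x) \mapsto N_{B_\psi(x)}(u)$ is outer semicontinuous on $D = \{(u,x) : x \in K, u \in B_\psi(x)\}$: if $(u^\nu, x^\nu) \to (\bar{u}, \bar{x})$ in $D$, $\pi^\nu \in N_{B_\psi(x^\nu)}(u^\nu)$, $\pi^\nu \to \bar{\pi}$, then $\bar{\pi} \in N_{B_\psi(\bar{x})}(\bar{u})$. -/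

import Mathlib

/-! Every point `y` of the limit box is the limit of its coordinatewise clamps to the boxes of
radius `ψ (x ν)`; these lie in those boxes because `ψ ≥ 0`, and they converge to `y` because `ψ` is
continuous. Testing `π ν` against them and letting `ν → ∞` gives the normal-cone inequality. -/

open Filter Topology

/-- The normal cone to a convex set `C` at `u`. -/
def normalCone {p : ℕ} (C : Set (EuclideanSpace ℝ (Fin p)))
    (u : EuclideanSpace ℝ (Fin p)) : Set (EuclideanSpace ℝ (Fin p)) :=
  {v | ∀ y ∈ C, (inner ℝ v (y - u) : ℝ) ≤ 0}

theorem mem_normalCone_of_tendsto {p : ℕ} {ι : Type*} {l : Filter ι} [l.NeBot]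
    {C : ι → Set (EuclideanSpace ℝ (Fin p))} {D : Set (EuclideanSpace ℝ (Fin p))}
    {u π : ι → EuclideanSpace ℝ (Fin p)} {u₀ π₀ : EuclideanSpace ℝ (Fin p)}
    (happrox : ∀ y ∈ D, ∃ z : ι → EuclideanSpace ℝ (Fin p),
      (∀ᶠ i in l, z i ∈ C i) ∧ Tendsto z l (𝓝 y))
    (hπ : ∀ᶠ i in l, π i ∈ normalCone (C i) (u i))
    (hu : Tendsto u l (𝓝 u₀)) (hπlim : Tendsto π l (𝓝 π₀)) :
    π₀ ∈ normalCone D u₀ := by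
  intro y hy
  obtain ⟨z, hzC, hz⟩ := happrox y hy
  exact le_of_tendsto (hπlim.inner (hz.sub hu)) ((hπ.and hzC).mono fun i hi => hi.1 _ hi.2)

def boxClamp {p : ℕ} (r : ℝ) (y : EuclideanSpace ℝ (Fin p)) : EuclideanSpace ℝ (Fin p) :=
  WithLp.toLp 2 fun j => max (-r) (min (y j) r)

theorem abs_boxClamp_le {p : ℕ} {r : ℝ} (hr : 0 ≤ r) (y : EuclideanSpace ℝ (Fin p)) (j : Fin p) :
    |boxClamp r y j| ≤ r :=
  abs_le.mpr ⟨le_max_left _ _, max_le (by linarith) (min_le_right _ _)⟩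

theorem boxClamp_of_abs_le {p : ℕ} {r : ℝ} {y : EuclideanSpace ℝ (Fin p)}
    (hy : ∀ j, |y j| ≤ r) : boxClamp r y = y := by
  ext j
  obtain ⟨hlo, hhi⟩ := abs_le.mp (hy j)
  simp [boxClamp, min_eq_left hhi, max_eq_right hlo]

theorem continuous_boxClamp {p : ℕ} (y : EuclideanSpace ℝ (Fin p)) :
    Continuous fun r => boxClamp r y :=
  (PiLp.continuous_toLp 2 _).comp <| continuous_pi fun _ =>
    continuous_neg.max (continuous_const.min continuous_id)

theorem normal_cone_varying_ball_osc_general {n p : ℕ}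
    (K : Set (EuclideanSpace ℝ (Fin n)))
    (ψ : EuclideanSpace ℝ (Fin n) → ℝ) (hψ0 : ∀ x ∈ K, 0 ≤ ψ x)
    (hψc : ContinuousOn ψ K)
    (u : ℕ → EuclideanSpace ℝ (Fin p)) (x : ℕ → EuclideanSpace ℝ (Fin n))
    (ub : EuclideanSpace ℝ (Fin p)) (xb : EuclideanSpace ℝ (Fin n))
    (hmem : ∀ ν, x ν ∈ K ∧ ∀ j, |u ν j| ≤ ψ (x ν))
    (hmemb : xb ∈ K ∧ ∀ j, |ub j| ≤ ψ xb)
    (hu : Tendsto u atTop (𝓝 ub)) (hx : Tendsto x atTop (𝓝 xb))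
    (π : ℕ → EuclideanSpace ℝ (Fin p)) (πb : EuclideanSpace ℝ (Fin p))
    (hπ : ∀ ν, π ν ∈ normalCone {w | ∀ j, |w j| ≤ ψ (x ν)} (u ν))
    (hπconv : Tendsto π atTop (𝓝 πb)) :
    πb ∈ normalCone {w | ∀ j, |w j| ≤ ψ xb} ub := by
  have hψx : Tendsto (fun ν => ψ (x ν)) atTop (𝓝 (ψ xb)) :=
    (hψc xb hmemb.1).tendsto.comp
      (tendsto_nhdsWithin_iff.mpr ⟨hx, .of_forall fun ν => (hmem ν).1⟩)
  refine mem_normalCone_of_tendsto (fun y hy => ⟨fun ν => boxClamp (ψ (x ν)) y, ?_, ?_⟩)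
    (.of_forall hπ) hu hπconv
  · exact .of_forall fun ν => abs_boxClamp_le (hψ0 _ (hmem ν).1) y
  · simpa only [Function.comp_def, boxClamp_of_abs_le hy] using
      ((continuous_boxClamp y).tendsto _).comp hψx

theorem normal_cone_varying_ball_osc {n p : ℕ}
    (K : Set (EuclideanSpace ℝ (Fin n))) (hKcl : IsClosed K) (hKconv : Convex ℝ K)
    (ψ : EuclideanSpace ℝ (Fin n) → ℝ) (hψ0 : ∀ x ∈ K, 0 ≤ ψ x)
    (hψc : ContinuousOn ψ K)
    (u : ℕ → EuclideanSpace ℝ (Fin p)) (x : ℕ → EuclideanSpace ℝ (Fin n))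
    (ub : EuclideanSpace ℝ (Fin p)) (xb : EuclideanSpace ℝ (Fin n))
    (hmem : ∀ ν, x ν ∈ K ∧ ∀ j, |u ν j| ≤ ψ (x ν))
    (hmemb : xb ∈ K ∧ ∀ j, |ub j| ≤ ψ xb)
    (hu : Tendsto u atTop (𝓝 ub)) (hx : Tendsto x atTop (𝓝 xb))
    (π : ℕ → EuclideanSpace ℝ (Fin p)) (πb : EuclideanSpace ℝ (Fin p))
    (hπ : ∀ ν, π ν ∈ normalCone {w | ∀ j, |w j| ≤ ψ (x ν)} (u ν))
    (hπconv : Tendsto π atTop (𝓝 πb)) :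
    πb ∈ normalCone {w | ∀ j, |w j| ≤ ψ xb} ub :=
  normal_cone_varying_ball_osc_general K ψ hψ0 hψc u x ub xb hmem hmemb hu hx π πb hπ hπconv
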